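/- arXiv:1711.01735 — 2 statements merged into one kernel-verified Lean document; each statement's English description precedes it below -/
import Mathlib

section
/- Strong gluing: suppose for each natural number y there is a non-deterministic flow of uniform length t from A(y) to A(y+1). Then for any s there is a non-deterministic flow of length s·(t+2) from A(0) to A(s), obtained by concatenating the s flows with the formulas A(y) inserted at positions y·(t+2). -/
/-!
Cut the positions `0, 1, 2, …` into blocks of length `t + 2`: block `y` starts with `A y`
and then runs through `H y 0, …, H y t`. Every step inside a block is a step of the flow
`H y`, the step into the block is `A y → H y 0`, and the step out of it is
`H y t → A (y + 1)`, the first entry of the next block.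
-/

namespace Flow

variable {α : Type*}

def glue (A : ℕ → α) (H : ℕ → ℕ → α) (t u : ℕ) : α :=
  match u % (t + 2) with
  | 0 => A (u / (t + 2))
  | i + 1 => H (u / (t + 2)) i

variable (A : ℕ → α) (H : ℕ → ℕ → α) {t : ℕ}

theorem glue_mul (y : ℕ) : glue A H t (y * (t + 2)) = A y := by
  simp [glue]

theorem glue_mul_add_succ (y : ℕ) {i : ℕ} (hi : i ≤ t) :
    glue A H t (y * (t + 2) + (i + 1)) = H y i := by
  have hlt : i + 1 < t + 2 := by omega
  have hdiv : (y * (t + 2) + (i + 1)) / (t + 2) = y := by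
    rw [Nat.mul_comm, Nat.mul_add_div (by omega), Nat.div_eq_of_lt hlt, Nat.add_zero]
  simp only [glue, Nat.mul_add_mod_of_lt hlt, hdiv]

theorem glue_step (R : α → α → Prop) (hA : ∀ y, R (A y) (H y 0))
    (hH : ∀ y, ∀ i < t, R (H y i) (H y (i + 1))) (hB : ∀ y, R (H y t) (A (y + 1))) (u : ℕ) :
    R (glue A H t u) (glue A H t (u + 1)) := by
  obtain ⟨y, r, hr, rfl⟩ : ∃ y r, r < t + 2 ∧ u = y * (t + 2) + r :=
    ⟨u / (t + 2), u % (t + 2), Nat.mod_lt _ (by omega), (Nat.div_add_mod' u _).symm⟩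
  rcases r with _ | i
  · rw [Nat.add_zero, glue_mul, glue_mul_add_succ A H y (Nat.zero_le t)]
    exact hA y
  obtain hi | rfl : i < t ∨ t = i := by omega
  · rw [glue_mul_add_succ A H y hi.le, Nat.add_assoc, glue_mul_add_succ A H y hi]
    exact hH y i hi
  · rw [glue_mul_add_succ A H y le_rfl, show y * (t + 2) + (t + 1) + 1 = (y + 1) * (t + 2) by ring,
      glue_mul]
    exact hB y

end Flow

open Flow in
theorem strong_gluing_general {Formula : Type*} (Prov : Formula → Formula → Prop)
    (hrefl : ∀ X, Prov X X)
    (A : ℕ → Formula) (t : ℕ) (H : ℕ → ℕ → Formula)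
    (h0 : ∀ y, Prov (A y) (H y 0) ∧ Prov (H y 0) (A y))
    (ht : ∀ y, Prov (H y t) (A (y + 1)) ∧ Prov (A (y + 1)) (H y t))
    (hstep : ∀ y, ∀ u < t, Prov (H y u) (H y (u + 1)))
    (s : ℕ) :
    ∃ I : ℕ → Formula,
      (Prov (A 0) (I 0) ∧ Prov (I 0) (A 0)) ∧
      (Prov (I (s * (t + 2))) (A s) ∧ Prov (A s) (I (s * (t + 2)))) ∧
      (∀ y ≤ s, I (y * (t + 2)) = A y) ∧
      (∀ u < s * (t + 2), Prov (I u) (I (u + 1))) := by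
  have hstart : glue A H t 0 = A 0 := by simpa using glue_mul A H (t := t) 0
  refine ⟨glue A H t, ?_, ?_, fun y _ => glue_mul A H y,
    fun u _ => glue_step A H Prov (fun y => (h0 y).1) hstep (fun y => (ht y).1) u⟩
  · rw [hstart]
    exact ⟨hrefl _, hrefl _⟩
  · rw [glue_mul]
    exact ⟨hrefl _, hrefl _⟩

/-- Strong Gluing (Lemma 2.24(ii), abstract form): given, for each `y`, a flow `H y`
of uniform length `t` from `A y` to `A (y+1)`, there is a flow `I` of length
`s * (t + 2)` from `A 0` to `A s`, with the formulas `A y` inserted at positions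
`y * (t + 2)`. `Prov X Y` means `⊢ X → Y`. -/
theorem strong_gluing {Formula : Type*} (Prov : Formula → Formula → Prop)
    (hrefl : ∀ X, Prov X X)
    (htrans : ∀ X Y Z, Prov X Y → Prov Y Z → Prov X Z)
    (A : ℕ → Formula) (t : ℕ) (H : ℕ → ℕ → Formula)
    (h0 : ∀ y, Prov (A y) (H y 0) ∧ Prov (H y 0) (A y))
    (ht : ∀ y, Prov (H y t) (A (y + 1)) ∧ Prov (A (y + 1)) (H y t))
    (hstep : ∀ y, ∀ u < t, Prov (H y u) (H y (u + 1)))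
    (s : ℕ) :
    ∃ I : ℕ → Formula,
      (Prov (A 0) (I 0) ∧ Prov (I 0) (A 0)) ∧
      (Prov (I (s * (t + 2))) (A s) ∧ Prov (A s) (I (s * (t + 2)))) ∧
      (∀ y ≤ s, I (y * (t + 2)) = A y) ∧
      (∀ u < s * (t + 2), Prov (I u) (I (u + 1))) :=
  strong_gluing_general Prov hrefl A t H h0 ht hstep s
end

section
/- Induction rule for flows in a distributive lattice: if for every y < s there is a flow (monotone finite chain) of uniform length t from (g ⊓ A y) ⊔ d to (g ⊓ A (y+1)) ⊔ d, then there is a flow of length s·(t+2) from (g ⊓ A 0) ⊔ d to (g ⊓ A s) ⊔ d; in particular there is a flow from g ⊓ A 0 to d ⊔ A s. -/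
/-!
Flows compose by concatenation and can be padded by constant steps. Padding each given flow
of length `t` by two constant steps and concatenating the `s` resulting blocks gives the flow of
length `s * (t + 2)`; prepending `g ⊓ A 0 ≤ (g ⊓ A 0) ⊔ d` and appending
`(g ⊓ A s) ⊔ d ≤ d ⊔ A s` gives the second flow.
-/

namespace Flow

variable {P : Type*} [Preorder P]

def IsFlow (H : ℕ → P) (m : ℕ) (a b : P) : Prop :=
  H 0 = a ∧ H m = b ∧ ∀ u < m, H u ≤ H (u + 1)

theorem isFlow_const (a : P) (n : ℕ) : IsFlow (fun _ => a) n a a :=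
  ⟨rfl, rfl, fun _ _ => le_rfl⟩

theorem isFlow_of_le {a b : P} (hab : a ≤ b) :
    IsFlow (fun u => if u = 0 then a else b) 1 a b :=
  ⟨rfl, rfl, fun u hu => by obtain rfl : u = 0 := (by omega); simpa using hab⟩

theorem IsFlow.append {H K : ℕ → P} {m n : ℕ} {a b c : P}
    (hH : IsFlow H m a b) (hK : IsFlow K n b c) :
    IsFlow (fun u => if u ≤ m then H u else K (u - m)) (m + n) a c := by
  obtain ⟨hH0, hHm, hHstep⟩ := hH
  obtain ⟨hK0, hKn, hKstep⟩ := hK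
  refine ⟨by simpa using hH0, ?_, fun u hu => ?_⟩
  · rcases Nat.eq_zero_or_pos n with rfl | hn
    · obtain rfl : b = c := hK0.symm.trans hKn
      simpa using hHm
    · simpa [show ¬m + n ≤ m by omega] using hKn
  rcases lt_trichotomy u m with hum | rfl | hmu
  · simpa [hum.le, Nat.succ_le_of_lt hum] using hHstep u hum
  · have : K (u - u) ≤ K (u + 1 - u) := by simpa using hKstep 0 (by omega)
    simpa [hHm, ← hK0] using this
  · simpa [hmu.not_ge, show ¬u + 1 ≤ m by omega, show u + 1 - m = u - m + 1 by omega]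
      using hKstep (u - m) (by omega)

theorem exists_isFlow_mul {F : ℕ → P} {s n : ℕ}
    (hF : ∀ y < s, ∃ H : ℕ → P, IsFlow H n (F y) (F (y + 1))) :
    ∃ I : ℕ → P, IsFlow I (s * n) (F 0) (F s) := by
  induction s with
  | zero => exact ⟨_, by simpa using isFlow_const (F 0) 0⟩
  | succ s ih =>
    obtain ⟨I, hI⟩ := ih fun y hy => hF y (by omega)
    obtain ⟨H, hH⟩ := hF s (by omega)
    exact ⟨_, Nat.succ_mul s n ▸ hI.append hH⟩

end Flow

open Flow in
/-- Induction rule for flows in a distributive lattice (abstract Lemma 2.28(ii)):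
if for every `y < s` there is a flow of uniform length `t` from `(g ⊓ A y) ⊔ d` to
`(g ⊓ A (y+1)) ⊔ d`, then there is a flow of length `s * (t + 2)` from
`(g ⊓ A 0) ⊔ d` to `(g ⊓ A s) ⊔ d`; in particular there is a flow from `g ⊓ A 0`
to `d ⊔ A s`. -/
theorem induction_rule_flows {P : Type*} [DistribLattice P]
    (g d : P) (A : ℕ → P) (s t : ℕ) (H : ℕ → ℕ → P)
    (h0 : ∀ y < s, H y 0 = (g ⊓ A y) ⊔ d)
    (ht : ∀ y < s, H y t = (g ⊓ A (y + 1)) ⊔ d)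
    (hstep : ∀ y < s, ∀ u < t, H y u ≤ H y (u + 1)) :
    (∃ I : ℕ → P,
      I 0 = (g ⊓ A 0) ⊔ d ∧ I (s * (t + 2)) = (g ⊓ A s) ⊔ d ∧
      ∀ u < s * (t + 2), I u ≤ I (u + 1)) ∧
    (∃ (m : ℕ) (J : ℕ → P),
      J 0 = g ⊓ A 0 ∧ J m = d ⊔ A s ∧ ∀ u < m, J u ≤ J (u + 1)) := by
  have hblock : ∀ y < s, ∃ K : ℕ → P,
      IsFlow K (t + 2) ((g ⊓ A y) ⊔ d) ((g ⊓ A (y + 1)) ⊔ d) := fun y hy =>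
    ⟨_, IsFlow.append ⟨h0 y hy, ht y hy, hstep y hy⟩ (isFlow_const _ 2)⟩
  obtain ⟨I, hI⟩ := exists_isFlow_mul (F := fun y => (g ⊓ A y) ⊔ d) hblock
  obtain ⟨J, hJ⟩ : ∃ J : ℕ → P, IsFlow J (1 + s * (t + 2) + 1) (g ⊓ A 0) (d ⊔ A s) :=
    ⟨_, ((isFlow_of_le le_sup_left).append hI).append
      (isFlow_of_le (sup_le (le_sup_of_le_right inf_le_right) le_sup_left))⟩
  exact ⟨⟨I, hI⟩, _, _, hJ⟩
end
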